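/- For n ≥ 0, let A_n = ⋃_{k ∈ ℕ} [2^{−n−1} + k·2^{1−n}, 3·2^{−n−1} + k·2^{1−n}). Then A = ⋂_{n ≥ 0} A_n intersected with [0,2] is exactly the two-point set {2/3, 4/3}. -/

import Mathlib

/-! Writing `t = x / 2`, a point `x ≥ 0` lies in `A n` exactly when the fractional part of
`2 ^ n * t` lies in `[1/4, 3/4)`, so the question is which orbits of the doubling map stay in
`[1/4, 3/4)`. On `[1/4, 1/2)` and on `[1/2, 3/4)` the doubling map is an affine expansion by `2`
swapping `1/3` and `2/3`, so it doubles the distance to `{1/3, 2/3}`; since that distance stays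
at most `1` along the orbit, it is `0`. -/

/-- `A n` is the set of directions for which the singular orbit `γₙ` of the exponential
step billiard directly crosses the aperture `G_{n+1}`. -/
noncomputable def Aset (n : ℕ) : Set ℝ :=
  ⋃ k : ℕ, Set.Ico ((2:ℝ) ^ (-(n : ℤ) - 1) + (k : ℝ) * 2 ^ (1 - (n : ℤ)))
                   (3 * (2:ℝ) ^ (-(n : ℤ) - 1) + (k : ℝ) * 2 ^ (1 - (n : ℤ)))

open Set Int

lemma exists_nat_add_le_lt_add_iff {y a b : ℝ} (ha : 0 ≤ a) (hb : b ≤ 1) :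
    (∃ k : ℕ, k + a ≤ y ∧ y < k + b) ↔ 0 ≤ y ∧ fract y ∈ Ico a b := by
  constructor
  · rintro ⟨k, hak, hkb⟩
    have hfract : fract y = y - k :=
      fract_eq_iff.2 ⟨by linarith, by linarith, k, by simp⟩
    exact ⟨by linarith [(k.cast_nonneg : (0:ℝ) ≤ k)], by rw [hfract]; constructor <;> linarith⟩
  · rintro ⟨hy, hfa, hfb⟩
    have hfloor : (⌊y⌋₊ : ℝ) = y - fract y := by
      rw [natCast_floor_eq_intCast_floor hy, self_sub_fract]
    exact ⟨⌊y⌋₊, by linarith, by linarith⟩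

lemma mem_Aset_iff (n : ℕ) (x : ℝ) :
    x ∈ Aset n ↔ 0 ≤ x ∧ fract (2 ^ n * (x / 2)) ∈ Ico (1/4 : ℝ) (3/4) := by
  have hperiod : (2:ℝ) ^ (1 - (n : ℤ)) = 2 / 2 ^ n := by
    rw [zpow_sub₀ two_ne_zero, zpow_one, zpow_natCast]
  have hquarter : (2:ℝ) ^ (-(n : ℤ) - 1) = 2 ^ (1 - (n : ℤ)) / 4 := by
    rw [show -(n : ℤ) - 1 = (1 - n) - 2 by ring, zpow_sub₀ two_ne_zero]; norm_num
  have hc : (0:ℝ) < 2 ^ (1 - (n : ℤ)) := by positivity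
  have hscale : 2 ^ n * (x / 2) = x / 2 ^ (1 - (n : ℤ)) := by
    rw [hperiod]; field_simp
  have hx : 0 ≤ x ↔ 0 ≤ 2 ^ n * (x / 2) := by
    rw [mul_nonneg_iff_of_pos_left (by positivity)]; constructor <;> intro h <;> linarith
  rw [hx, ← exists_nat_add_le_lt_add_iff (by norm_num) (by norm_num), hscale]
  simp only [Aset, mem_iUnion, mem_Ico, hquarter, le_div_iff₀ hc, div_lt_iff₀ hc]
  refine exists_congr fun k => and_congr ?_ ?_ <;> constructor <;> intro h <;> linarith

lemma fract_two_mul_of_fract_lt_half {y : ℝ} (h : fract y < 1/2) :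
    fract (2 * y) = 2 * fract y :=
  fract_eq_iff.2 ⟨by linarith [fract_nonneg y], by linarith,
    2 * ⌊y⌋, by push_cast; linarith [self_sub_fract y]⟩

lemma fract_two_mul_of_half_le_fract {y : ℝ} (h : 1/2 ≤ fract y) :
    fract (2 * y) = 2 * fract y - 1 :=
  fract_eq_iff.2 ⟨by linarith, by linarith [fract_lt_one y],
    2 * ⌊y⌋ + 1, by push_cast; linarith [self_sub_fract y]⟩

noncomputable def distThirds (s : ℝ) : ℝ := min |s - 1/3| |s - 2/3|

lemma distThirds_fract_le_one (y : ℝ) : distThirds (fract y) ≤ 1 :=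
  (min_le_left _ _).trans <| abs_le.2 ⟨by linarith [fract_nonneg y], by linarith [fract_lt_one y]⟩

lemma distThirds_fract_two_mul {y : ℝ} (h : fract y ∈ Ico (1/4 : ℝ) (3/4)) :
    distThirds (fract (2 * y)) = 2 * distThirds (fract y) := by
  obtain ⟨hlo, hhi⟩ := h
  unfold distThirds
  rcases lt_or_ge (fract y) (1/2) with hhalf | hhalf
  · rw [fract_two_mul_of_fract_lt_half hhalf, abs_of_pos (by linarith : 0 < 2 * fract y - 1/3),
      abs_of_neg (by linarith : fract y - 2/3 < 0),
      min_eq_right (abs_le.2 ⟨by linarith, by linarith⟩),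
      min_eq_left (abs_le.2 ⟨by linarith, by linarith⟩),
      show 2 * fract y - 2/3 = 2 * (fract y - 1/3) by ring, abs_mul, abs_two]
  · rw [fract_two_mul_of_half_le_fract hhalf, abs_of_neg (by linarith : 2 * fract y - 1 - 2/3 < 0),
      abs_of_pos (by linarith : 0 < fract y - 1/3),
      min_eq_left (abs_le.2 ⟨by linarith, by linarith⟩),
      min_eq_right (abs_le.2 ⟨by linarith, by linarith⟩),
      show 2 * fract y - 1 - 1/3 = 2 * (fract y - 2/3) by ring, abs_mul, abs_two]

lemma distThirds_fract_two_pow_mul {t : ℝ}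
    (h : ∀ n : ℕ, fract (2 ^ n * t) ∈ Ico (1/4 : ℝ) (3/4)) (n : ℕ) :
    distThirds (fract (2 ^ n * t)) = 2 ^ n * distThirds (fract t) := by
  induction n with
  | zero => simp
  | succ n ih => rw [pow_succ', mul_assoc, distThirds_fract_two_mul (h n), ih, mul_assoc]

lemma fract_eq_one_third_or_two_thirds_of_forall_mem_Ico {t : ℝ}
    (h : ∀ n : ℕ, fract (2 ^ n * t) ∈ Ico (1/4 : ℝ) (3/4)) :
    fract t = 1/3 ∨ fract t = 2/3 := by
  have hle : distThirds (fract t) ≤ 0 := by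
    by_contra! hpos
    obtain ⟨n, hn⟩ := pow_unbounded_of_one_lt (distThirds (fract t))⁻¹ one_lt_two
    have hbound := distThirds_fract_le_one (2 ^ n * t)
    rw [distThirds_fract_two_pow_mul h n] at hbound
    linarith [(inv_lt_iff_one_lt_mul₀ hpos).1 hn]
  rcases min_le_iff.1 hle with h | h
  · exact Or.inl (sub_eq_zero.1 (abs_nonpos_iff.1 h))
  · exact Or.inr (sub_eq_zero.1 (abs_nonpos_iff.1 h))

lemma fract_two_mul_eq_one_third_or_two_thirds {y : ℝ} (h : fract y = 1/3 ∨ fract y = 2/3) :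
    fract (2 * y) = 1/3 ∨ fract (2 * y) = 2/3 := by
  rcases h with h | h
  · right; rw [fract_two_mul_of_fract_lt_half (by linarith), h]; norm_num
  · left; rw [fract_two_mul_of_half_le_fract (by linarith), h]; norm_num

theorem forall_fract_two_pow_mul_mem_Ico_iff (t : ℝ) :
    (∀ n : ℕ, fract (2 ^ n * t) ∈ Ico (1/4 : ℝ) (3/4)) ↔ fract t = 1/3 ∨ fract t = 2/3 := by
  refine ⟨fract_eq_one_third_or_two_thirds_of_forall_mem_Ico, fun h n => ?_⟩
  have horbit : fract (2 ^ n * t) = 1/3 ∨ fract (2 ^ n * t) = 2/3 := by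
    induction n with
    | zero => simpa using h
    | succ n ih => rw [pow_succ', mul_assoc]; exact fract_two_mul_eq_one_third_or_two_thirds ih
  rcases horbit with h | h <;> rw [h] <;> norm_num

/-- The directions in `[0,2]` along which every `γₙ` crosses `G_{n+1}` are exactly
`2/3` and `4/3`. -/
theorem inter_Aset_eq_pair :
    (⋂ n : ℕ, Aset n) ∩ Set.Icc (0:ℝ) 2 = {2/3, 4/3} := by
  ext x
  simp only [mem_inter_iff, mem_iInter, mem_Aset_iff, forall_and,
    forall_fract_two_pow_mul_mem_Ico_iff, mem_Icc, mem_insert_iff, mem_singleton_iff]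
  constructor
  · rintro ⟨⟨-, hfract⟩, hx0, hx2⟩
    have hlt : x / 2 < 1 := by
      refine lt_of_le_of_ne (by linarith) fun h1 => ?_
      rw [h1, fract_one] at hfract
      norm_num at hfract
    rw [fract_eq_self.2 ⟨by linarith, hlt⟩] at hfract
    rcases hfract with h | h
    · left; linarith
    · right; linarith
  · rintro (rfl | rfl) <;> norm_num
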